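/- arXiv:1912.00347 — 4 statements merged into one kernel-verified Lean document; each statement's English description precedes it below -/
import Mathlib

section
/- Let k be any field, V ⊆ kⁿ an affine algebraic set with coordinate ring k[V], and S = {g ∈ k[V] : g(P) ≠ 0 for all P ∈ V}. Then an ideal I of k[V] has a common zero in V if and only if I ∩ S = ∅. -/
/-!
Only `←` has content: if no point of `V` is a common zero of `I`, we need `g ∈ I` vanishing
nowhere on `V`. Over an algebraically closed field the weak Nullstellensatz, applied to the
preimage of `I` in `k[X₁,…,Xₙ]` (which contains the equations of `V`), gives `I = k[V]` and
`g = 1`. Otherwise take a polynomial `p` of positive degree without roots in `k`: its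
homogenization `F(a, b)` vanishes only at `(0, 0)`, so `F(f₁, f₂) ∈ (f₁, f₂)` vanishes exactly at
the common zeros of `f₁` and `f₂`. Folding this over finitely many generators of `I` (`k[V]` is
Noetherian) gives `g`.
-/

open MvPolynomial

/-- The coordinate ring `k[V]` of `V ⊆ kⁿ`, realised as the `k`-algebra of polynomial
functions `V → k`. -/
noncomputable def coordRing (k : Type) [Field k] (n : ℕ) (V : Set (Fin n → k)) :
    Subalgebra k (↥V → k) :=
  (MvPolynomial.aeval (fun i (x : ↥V) => (x : Fin n → k) i) :
    MvPolynomial (Fin n) k →ₐ[k] (↥V → k)).range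

namespace Polynomial

open Finset

lemma eval_homogenize_natDegree_of_eq_zero {R : Type*} [CommSemiring R] (p : R[X])
    {x : Fin 2 → R} (hx : x 1 = 0) :
    MvPolynomial.eval x (p.homogenize p.natDegree) = p.leadingCoeff * x 0 ^ p.natDegree := by
  rw [homogenize, map_sum, sum_eq_single (p.natDegree, 0)]
  · simp [MvPolynomial.eval_monomial, Finsupp.prod_fintype]
  · rintro ⟨i, j⟩ hij hne
    have : j ≠ 0 := by rintro rfl; simp_all
    simp [MvPolynomial.eval_monomial, Finsupp.prod_fintype, hx, zero_pow this]
  · simp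

lemma eval_homogenize_natDegree_eq_zero_iff {k : Type*} [Field k] {p : k[X]}
    (hp : 0 < p.natDegree) (hroot : ∀ a, ¬ p.IsRoot a) (x : Fin 2 → k) :
    MvPolynomial.eval x (p.homogenize p.natDegree) = 0 ↔ x = 0 := by
  have hlead : p.leadingCoeff ≠ 0 := leadingCoeff_ne_zero.mpr (ne_zero_of_natDegree_gt hp)
  refine ⟨fun hx => ?_, ?_⟩
  · by_cases hx1 : x 1 = 0
    · rw [eval_homogenize_natDegree_of_eq_zero p hx1, mul_eq_zero, pow_eq_zero_iff hp.ne'] at hx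
      ext i; fin_cases i
      exacts [hx.resolve_left hlead, hx1]
    · rw [eval_homogenize le_rfl x hx1, mul_eq_zero, pow_eq_zero_iff hp.ne'] at hx
      exact absurd (hx.resolve_right hx1) (hroot _)
  · rintro rfl
    rw [eval_homogenize_natDegree_of_eq_zero p rfl]
    simp [hp.ne']

end Polynomial

lemma exists_natDegree_pos_forall_not_isRoot_of_not_isAlgClosed {k : Type*} [Field k]
    (hk : ¬IsAlgClosed k) : ∃ p : Polynomial k, 0 < p.natDegree ∧ ∀ a, ¬ p.IsRoot a := by
  contrapose! hk
  exact IsAlgClosed.of_exists_root k fun p _ hirr => hk p hirr.natDegree_pos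

lemma MvPolynomial.IsHomogeneous.aeval_mem_span_pow {σ R A : Type*} [CommSemiring R]
    [CommSemiring A] [Algebra R A] {F : MvPolynomial σ R} {d : ℕ} (hF : F.IsHomogeneous d)
    (x : σ → A) : MvPolynomial.aeval x F ∈ Ideal.span (Set.range x) ^ d := by
  rw [Ideal.mem_span_pow_iff_exists_isHomogeneous]
  exact ⟨map (algebraMap R A) F, hF.map _, by rw [eval_map, aeval_def]⟩

lemma exists_mem_span_pair_forall_algHom_eq_zero_iff {k R : Type*} [Field k] [CommRing R]
    [Algebra k R] (hk : ¬IsAlgClosed k) (f g : R) :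
    ∃ h ∈ Ideal.span {f, g}, ∀ φ : R →ₐ[k] k, φ h = 0 ↔ φ f = 0 ∧ φ g = 0 := by
  obtain ⟨p, hp, hroot⟩ := exists_natDegree_pos_forall_not_isRoot_of_not_isAlgClosed hk
  refine ⟨aeval ![f, g] (p.homogenize p.natDegree), ?_, fun φ => ?_⟩
  · have := (p.isHomogeneous_homogenize (n := p.natDegree)).aeval_mem_span_pow ![f, g]
    rw [Matrix.range_cons_cons_empty] at this
    exact Ideal.pow_le_self hp.ne' this
  · rw [comp_aeval_apply]
    change eval _ _ = 0 ↔ _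
    rw [p.eval_homogenize_natDegree_eq_zero_iff hp hroot]
    simp [funext_iff, Fin.forall_fin_two]

theorem Ideal.FG.exists_mem_forall_algHom_eq_zero_iff_le_ker {k R : Type*} [Field k]
    [CommRing R] [Algebra k R] (hk : ¬IsAlgClosed k) {I : Ideal R} (hI : I.FG) :
    ∃ h ∈ I, ∀ φ : R →ₐ[k] k, φ h = 0 ↔ I ≤ RingHom.ker φ := by
  induction I, hI using Submodule.fg_induction with
  | singleton x =>
    exact ⟨x, Ideal.mem_span_singleton_self x, fun φ => by
      rw [← Ideal.span, Ideal.span_singleton_le_iff_mem, RingHom.mem_ker]⟩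
  | sup I J _ _ hI hJ =>
    obtain ⟨a, haI, ha⟩ := hI
    obtain ⟨b, hbJ, hb⟩ := hJ
    obtain ⟨h, hmem, hh⟩ := exists_mem_span_pair_forall_algHom_eq_zero_iff hk a b
    refine ⟨h, Ideal.span_le.mpr ?_ hmem, fun φ => by rw [hh, ha, hb, sup_le_iff]⟩
    rintro x (rfl | rfl)
    exacts [Ideal.mem_sup_left haI, Ideal.mem_sup_right hbJ]

lemma MvPolynomial.zeroLocus_nonempty_of_ne_top {k σ : Type*} (K : Type*) [Field k] [Field K]
    [Algebra k K] [IsAlgClosed K] [Finite σ] {J : Ideal (MvPolynomial σ k)} (hJ : J ≠ ⊤) :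
    (zeroLocus K J).Nonempty := by
  obtain ⟨M, hM, hJM⟩ := Ideal.exists_le_maximal J hJ
  obtain ⟨x, rfl⟩ := eq_vanishingIdeal_singleton_of_isMaximal K hM
  exact ⟨x, fun p hp => (mem_vanishingIdeal_singleton_iff x p).mp (hJM hp)⟩

namespace coordRing

variable {k : Type} [Field k] {n : ℕ} {V : Set (Fin n → k)}

variable (k n V) in
noncomputable def mk : MvPolynomial (Fin n) k →ₐ[k] coordRing k n V :=
  AlgHom.rangeRestrict _

lemma mk_surjective : Function.Surjective (mk k n V) :=
  AlgHom.rangeRestrict_surjective _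

@[simp]
lemma mk_apply (q : MvPolynomial (Fin n) k) (P : V) :
    (mk k n V q : V → k) P = eval (P : Fin n → k) q := by
  change Pi.evalAlgHom k (fun _ => k) P (aeval _ q) = _
  rw [comp_aeval_apply]
  rfl

instance : IsNoetherianRing (coordRing k n V) :=
  isNoetherianRing_of_surjective _ _ (mk k n V).toRingHom mk_surjective

noncomputable def evalAt (P : V) : coordRing k n V →ₐ[k] k :=
  (Pi.evalAlgHom k (fun _ => k) P).comp (coordRing k n V).val

lemma exists_forall_apply_eq_zero_of_ne_top [IsAlgClosed k]
    (hV : ∃ T : Set (MvPolynomial (Fin n) k), V = {x | ∀ f ∈ T, eval x f = 0})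
    {I : Ideal (coordRing k n V)} (hI : I ≠ ⊤) : ∃ P : V, ∀ f ∈ I, (f : V → k) P = 0 := by
  obtain ⟨T, rfl⟩ := hV
  obtain ⟨y, hy⟩ := zeroLocus_nonempty_of_ne_top k (Ideal.comap_ne_top (mk k n _) hI)
  have hT : ∀ f ∈ T, mk k n {x | ∀ f ∈ T, eval x f = 0} f = 0 := fun f hf =>
    Subtype.ext <| funext fun P => by rw [mk_apply]; exact P.2 f hf
  have hyV : ∀ f ∈ T, eval y f = 0 := fun f hf => hy f <| by simp [Ideal.mem_comap, hT f hf]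
  refine ⟨⟨y, hyV⟩, fun f hf => ?_⟩
  obtain ⟨q, rfl⟩ := mk_surjective f
  simpa using hy q hf

lemma exists_mem_forall_apply_ne_zero
    (hV : ∃ T : Set (MvPolynomial (Fin n) k), V = {x | ∀ f ∈ T, eval x f = 0})
    {I : Ideal (coordRing k n V)} (hI : ∀ P : V, ∃ f ∈ I, (f : V → k) P ≠ 0) :
    ∃ g ∈ I, ∀ P : V, (g : V → k) P ≠ 0 := by
  by_cases hk : IsAlgClosed k
  · refine ⟨1, ?_, fun P => one_ne_zero⟩
    by_contra h1
    obtain ⟨P, hP⟩ := exists_forall_apply_eq_zero_of_ne_top hV ((Ideal.ne_top_iff_one I).mpr h1)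
    obtain ⟨f, hf, hfP⟩ := hI P
    exact hfP (hP f hf)
  · obtain ⟨g, hgI, hg⟩ :=
      I.fg_of_isNoetherianRing.exists_mem_forall_algHom_eq_zero_iff_le_ker hk
    refine ⟨g, hgI, fun P hgP => ?_⟩
    obtain ⟨f, hf, hfP⟩ := hI P
    exact hfP ((hg (evalAt P)).mp hgP hf)

end coordRing

/-- Let `k` be any field, `V ⊆ kⁿ` an affine algebraic set with coordinate ring `k[V]`, and
`S = {g ∈ k[V] : g(P) ≠ 0 for all P ∈ V}`.  Then an ideal `I` of `k[V]` has a common zero in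
`V` if and only if `I ∩ S = ∅`. -/
theorem ideal_has_zero_iff_disjoint (k : Type) [Field k] (n : ℕ) (V : Set (Fin n → k))
    (hV : ∃ T : Set (MvPolynomial (Fin n) k), V = {x | ∀ f ∈ T, eval x f = 0})
    (S : Set ↥(coordRing k n V))
    (hS : S = {g : ↥(coordRing k n V) | ∀ P : ↥V, (g : ↥V → k) P ≠ 0})
    (I : Ideal ↥(coordRing k n V)) :
    (∃ P : ↥V, ∀ f ∈ I, (f : ↥V → k) P = 0) ↔ (I : Set ↥(coordRing k n V)) ∩ S = ∅ := by
  subst hS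
  constructor
  · rintro ⟨P, hP⟩
    exact Set.eq_empty_of_forall_notMem fun g ⟨hgI, hgS⟩ => hgS P (hP g hgI)
  · intro hIS
    by_contra! hno
    obtain ⟨g, hgI, hg⟩ := coordRing.exists_mem_forall_apply_ne_zero hV hno
    exact hIS.subset ⟨hgI, hg⟩
end

section
/- Let k be a field, A a finitely generated k-algebra, S = {f ∈ A : φ(f) ≠ 0 for all k-morphisms φ: A → k}, and M_A = {D(a₁,…,aₘ) : D a polynomial over k with no zero in k, a_i ∈ A}. Then for any ideal J of A: J ∩ S = ∅ if and only if J ∩ M_A = ∅. -/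
/-!
Every element of `M_A` is nonzero at every `k`-point of `A`, so `M_A ⊆ S`. Conversely, if `J`
meets `S` then no `k`-point of `A` kills `J`. Present `A` as a quotient of `k[X₁, …, Xₙ]` by `π`;
then `π⁻¹ J` has no zero in `kⁿ`, and any `P ∈ π⁻¹ J` without zeros in `kⁿ` gives
`π P = P(π X₁, …, π Xₙ) ∈ J ∩ M_A`. If `k` is algebraically closed, the Nullstellensatz forces
`π⁻¹ J = ⊤` and `P = 1` works. Otherwise, homogenizing a rootless polynomial gives a binary form
`F` vanishing only at `0`, and folding `F` over generators `g₁, …, g_r` of `π⁻¹ J`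
(`P₀ = 0`, `P_{i+1} = F(P_i, g_{i+1})`) yields `P ∈ π⁻¹ J` vanishing exactly at the common zeros
of the `gᵢ`, i.e. nowhere.
-/

open MvPolynomial

/-- The set `M_A` of all evaluations in `A` of polynomials over `k` with no rational zero
in `k`. -/
def MAset (k A : Type) [Field k] [CommRing A] [Algebra k A] : Set A :=
  {x | ∃ (m : ℕ) (D : MvPolynomial (Fin m) k) (b : Fin m → A),
    (∀ v : Fin m → k, eval v D ≠ 0) ∧ x = aeval b D}

namespace Polynomial

variable {k : Type*} [Field k]

lemma eval_homogenize_of_snd_eq_zero (p : k[X]) (n : ℕ) {x : Fin 2 → k} (hx : x 1 = 0) :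
    MvPolynomial.eval x (p.homogenize n) = p.coeff n * x 0 ^ n := by
  simp only [homogenize, Finset.Nat.sum_antidiagonal_eq_sum_range_succ_mk, MvPolynomial.eval_sum,
    MvPolynomial.eval_monomial]
  rw [Finset.sum_eq_single n]
  · simp [Finsupp.prod_fintype, Fin.prod_univ_two, hx]
  · intro i hi hin
    have : n - i ≠ 0 := by grind
    simp [Finsupp.prod_fintype, Fin.prod_univ_two, hx, this]
  · simp

lemma eval_homogenize_natDegree_eq_zero_iff_s9 {q : k[X]} (hq : ∀ a, q.eval a ≠ 0)
    (hd : 0 < q.natDegree) (x : Fin 2 → k) :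
    MvPolynomial.eval x (q.homogenize q.natDegree) = 0 ↔ x = 0 := by
  have hq0 : q ≠ 0 := by rintro rfl; exact hq 0 eval_zero
  constructor
  · intro h
    by_cases hx : x 1 = 0
    · rw [eval_homogenize_of_snd_eq_zero _ _ hx, coeff_natDegree] at h
      have : x 0 = 0 := by simpa [hq0, hd.ne'] using h
      ext i; fin_cases i <;> assumption
    · rw [eval_homogenize le_rfl _ hx] at h
      simp [hq, hx] at h
  · rintro rfl
    rw [eval_homogenize_of_snd_eq_zero _ _ rfl]
    simp [hd.ne']

end Polynomial

lemma exists_anisotropic_binary_form {k : Type*} [Field k] (hk : ¬ IsAlgClosed k) :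
    ∃ F : MvPolynomial (Fin 2) k, ∀ x, eval x F = 0 ↔ x = 0 := by
  obtain ⟨q, -, hirr, hq⟩ : ∃ q : Polynomial k, q.Monic ∧ Irreducible q ∧ ∀ a, q.eval a ≠ 0 := by
    by_contra! h
    exact hk (IsAlgClosed.of_exists_root k h)
  exact ⟨_, q.eval_homogenize_natDegree_eq_zero_iff_s9 hq hirr.natDegree_pos⟩

namespace MvPolynomial

variable {k R σ : Type*} [Field k] [CommRing R] [Algebra k R]

lemma aeval_mem_of_constantCoeff_eq_zero {I : Ideal R} {x : σ → R} (hx : ∀ i, x i ∈ I)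
    {F : MvPolynomial σ k} (hF : constantCoeff F = 0) : aeval x F ∈ I := by
  have hF : F ∈ idealOfVars σ k := by
    rw [← pow_one (idealOfVars σ k), mem_pow_idealOfVars_iff']
    intro m hm
    rw [Nat.lt_one_iff, Finsupp.degree_eq_zero_iff] at hm
    subst hm
    exact hF
  exact (Ideal.span_le (I := I.comap (aeval x))).mpr
    (Set.range_subset_iff.mpr fun i => by simpa using hx i) hF

end MvPolynomial

lemma exists_mem_span_forall_algHom_eq_zero_iff {k R : Type*} [Field k] [CommRing R]
    [Algebra k R] {F : MvPolynomial (Fin 2) k} (hF : ∀ x, eval x F = 0 ↔ x = 0) (T : Finset R) :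
    ∃ P ∈ Ideal.span (T : Set R), ∀ ψ : R →ₐ[k] k, ψ P = 0 ↔ ∀ g ∈ T, ψ g = 0 := by
  classical
  induction T using Finset.induction_on with
  | empty => exact ⟨0, zero_mem _, by simp⟩
  | insert a T _ ih =>
    obtain ⟨P, hPT, hP⟩ := ih
    have hspan : Ideal.span (T : Set R) ≤ Ideal.span (insert a T : Finset R) :=
      Ideal.span_mono (by simp)
    refine ⟨aeval ![P, a] F, aeval_mem_of_constantCoeff_eq_zero ?_ ?_, fun ψ => ?_⟩
    · exact Fin.forall_fin_two.mpr ⟨hspan hPT, Ideal.subset_span (by simp)⟩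
    · rw [← eval_zero, hF]
    · rw [comp_aeval_apply, aeval_eq_eval, hF, Finset.forall_mem_insert, ← hP]
      simp [funext_iff, Fin.forall_fin_two, and_comm]

lemma exists_mem_forall_eval_ne_zero {k σ : Type*} [Field k] [Finite σ]
    (I : Ideal (MvPolynomial σ k)) (hI : zeroLocus k I = ∅) :
    ∃ P ∈ I, ∀ v, eval v P ≠ 0 := by
  by_cases hk : IsAlgClosed k
  · have hIt : I = ⊤ := by
      rw [← Ideal.radical_eq_top, ← vanishingIdeal_zeroLocus_eq_radical (K := k), hI,
        vanishingIdeal_empty]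
    exact ⟨1, hIt ▸ Submodule.mem_top, by simp⟩
  · obtain ⟨F, hF⟩ := exists_anisotropic_binary_form hk
    obtain ⟨T, rfl⟩ := (IsNoetherian.noetherian I : I.FG)
    obtain ⟨P, hPT, hP⟩ := exists_mem_span_forall_algHom_eq_zero_iff hF T
    refine ⟨P, hPT, fun v hv => ?_⟩
    have hvI : v ∈ zeroLocus k (Ideal.span (T : Set (MvPolynomial σ k))) := by
      rw [zeroLocus_span]
      exact (hP (aeval v)).mp hv
    simp [hI] at hvI

section Presentation

variable {k A : Type} [Field k] [CommRing A] [Algebra k A]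

lemma map_ne_zero_of_mem_MAset {x : A} (hx : x ∈ MAset k A) (φ : A →ₐ[k] k) : φ x ≠ 0 := by
  obtain ⟨m, D, b, hD, rfl⟩ := hx
  rw [comp_aeval_apply, aeval_eq_eval]
  exact hD _

lemma zeroLocus_comap_eq_empty {σ : Type*} {π : MvPolynomial σ k →ₐ[k] A}
    (hπ : Function.Surjective π) {J : Ideal A} (hJ : ∀ φ : A →ₐ[k] k, ¬ J ≤ RingHom.ker φ) :
    zeroLocus k (J.comap π) = ∅ := by
  refine Set.eq_empty_of_forall_notMem fun v hv => ?_
  have hker : RingHom.ker π.toRingHom ≤ RingHom.ker (aeval v).toRingHom := fun F hF =>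
    -- `RingHom.ker π` is `Ideal.comap π ⊥`
    hv F (Ideal.comap_mono bot_le hF)
  refine hJ (π.liftOfSurjective hπ (aeval v) hker) fun j hj => ?_
  obtain ⟨F, rfl⟩ := hπ j
  rw [RingHom.mem_ker, AlgHom.liftOfSurjective_apply]
  exact hv F hj

lemma exists_mem_MAset_of_forall_not_le_ker [Algebra.FiniteType k A] {J : Ideal A}
    (hJ : ∀ φ : A →ₐ[k] k, ¬ J ≤ RingHom.ker φ) : ∃ x ∈ J, x ∈ MAset k A := by
  obtain ⟨n, π, hπ⟩ := Algebra.FiniteType.iff_quotient_mvPolynomial''.mp ‹_›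
  obtain ⟨P, hPJ, hP⟩ := exists_mem_forall_eval_ne_zero _ (zeroLocus_comap_eq_empty hπ hJ)
  exact ⟨π P, hPJ, n, P, π ∘ X, hP, by rw [← aeval_unique]⟩

end Presentation

/-- Let `k` be a field, `A` a finitely generated `k`-algebra,
`S = {f ∈ A : φ(f) ≠ 0 for all k-morphisms φ : A → k}` and `M_A` the set of evaluations at
tuples of `A` of polynomials over `k` with no zero in `k`.  Then for any ideal `J` of `A`,
`J ∩ S = ∅` if and only if `J ∩ M_A = ∅`. -/
theorem disjoint_S_iff_disjoint_MA (k A : Type) [Field k] [CommRing A] [Algebra k A]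
    [Algebra.FiniteType k A]
    (S : Set A) (hS : S = {f : A | ∀ φ : A →ₐ[k] k, φ f ≠ 0})
    (J : Ideal A) :
    (J : Set A) ∩ S = ∅ ↔ (J : Set A) ∩ MAset k A = ∅ := by
  subst hS
  simp only [Set.eq_empty_iff_forall_notMem, Set.mem_inter_iff, SetLike.mem_coe, not_and]
  constructor
  · exact fun h x hxJ hx => h x hxJ fun φ => map_ne_zero_of_mem_MAset hx φ
  · intro h f hfJ hf
    obtain ⟨x, hxJ, hx⟩ := exists_mem_MAset_of_forall_not_le_ker fun φ hle => hf φ (hle hfJ)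
    exact h x hxJ hx
end

section
/- For every finitely generated algebra A over a field k, the canonical localization A_M (localization at the multiplicative set M_A of evaluations of polynomials with no rational zero in k) is isomorphic to the localization A_S, where S = {f ∈ A : φ(f) ≠ 0 for all k-morphisms φ: A → k}. -/
/-!
Every element of `M_A` lies in `S`, so `A_S` is a localization of `A_M` as soon as every
`f ∈ S` divides an element of `M_A`. Present `A = k[X₁, …, Xₙ]/I` and lift `f` to `F`: the
ideal `(F) + I` has no zero in `kⁿ`, since such a zero would be a `k`-point of `A` killing `f`.
An ideal without rational zeros contains a polynomial without rational zeros. Over an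
algebraically closed field the ideal is the unit ideal by the Nullstellensatz. Otherwise the
homogenization of a polynomial without roots is a binary form vanishing only at the origin, and
substituting pairs of polynomials into it folds the finitely many generators of the ideal into
one polynomial with the same zeros.
-/

open MvPolynomial

/-- The multiplicative set `S` of elements of `A` not annihilated by any `k`-point of `A`. -/
def Smonoid (k A : Type) [Field k] [CommRing A] [Algebra k A] : Submonoid A where
  carrier := {f : A | ∀ φ : A →ₐ[k] k, φ f ≠ 0}
  one_mem' := fun φ => by simp
  mul_mem' := fun {a b} ha hb φ => by
    rw [map_mul]; exact mul_ne_zero (ha φ) (hb φ)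

theorem MvPolynomial.aeval_mem_span_range_of_constantCoeff_eq_zero {σ R B : Type*} [CommRing R]
    [CommRing B] [Algebra R B] (x : σ → B) {q : MvPolynomial σ R} (hq : constantCoeff q = 0) :
    aeval x q ∈ Ideal.span (Set.range x) := by
  have hX : q ∈ Ideal.span (Set.range X) := by
    rw [← Set.image_univ]
    refine mem_ideal_span_X_image.2 fun m hm => ?_
    by_contra! h
    obtain rfl : m = 0 := by ext i; simpa using h i
    exact mem_support_iff.1 hm (by rwa [← constantCoeff_eq])
  simpa [Ideal.map_span, ← Set.range_comp, Function.comp_def] using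
    Ideal.mem_map_of_mem (aeval x) hX

namespace Polynomial

variable {R : Type*} [CommSemiring R]

theorem constantCoeff_homogenize (p : R[X]) {n : ℕ} (hn : n ≠ 0) :
    MvPolynomial.constantCoeff (p.homogenize n) = 0 := by
  simp [constantCoeff_eq, coeff_homogenize, hn.symm]

theorem eval_homogenize_natDegree_vecCons_zero (p : R[X]) (a : R) :
    MvPolynomial.eval ![a, 0] (p.homogenize p.natDegree) = p.leadingCoeff * a ^ p.natDegree := by
  simp only [homogenize, map_sum, MvPolynomial.eval_monomial,
    Finset.Nat.sum_antidiagonal_eq_sum_range_succ_mk]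
  rw [Finset.sum_eq_single p.natDegree]
  · simp [Finsupp.prod_fintype]
  · intro i hi hne
    have : p.natDegree - i ≠ 0 := by grind
    simp [Finsupp.prod_fintype, this]
  · simp

theorem eq_zero_of_eval_homogenize_eq_zero {k : Type*} [Field k] {p : k[X]}
    (hroot : ∀ x, ¬ p.IsRoot x) (hd : 0 < p.natDegree) {x : Fin 2 → k}
    (hx : MvPolynomial.eval x (p.homogenize p.natDegree) = 0) : x = 0 := by
  by_cases hx₁ : x 1 = 0
  · have hx' : x = ![x 0, 0] := by ext i; fin_cases i <;> simp [hx₁]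
    rw [hx', eval_homogenize_natDegree_vecCons_zero] at hx
    have hx₀ : x 0 = 0 := pow_eq_zero_iff hd.ne' |>.1 <|
      (mul_eq_zero.1 hx).resolve_left (leadingCoeff_ne_zero.2 (ne_zero_of_natDegree_gt hd))
    rw [hx', hx₀]; ext i; fin_cases i <;> rfl
  · rw [eval_homogenize le_rfl x hx₁] at hx
    exact absurd ((mul_eq_zero.1 hx).resolve_right (pow_ne_zero _ hx₁)) (hroot _)

theorem exists_natDegree_pos_forall_not_isRoot {k : Type*} [Field k]
    (hk : ¬ IsAlgClosed k) :
    ∃ p : k[X], 0 < p.natDegree ∧ ∀ x, ¬ p.IsRoot x := by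
  contrapose! hk
  exact IsAlgClosed.of_exists_root k fun p _ hp => hk p hp.natDegree_pos

end Polynomial

section AlgHomToField

variable {k B : Type*} [Field k] [CommRing B] [Algebra k B]

theorem exists_mem_span_pair_forall_algHom_eq_zero (hk : ¬ IsAlgClosed k) (a b : B) :
    ∃ D ∈ Ideal.span {a, b}, ∀ φ : B →ₐ[k] k, φ D = 0 → φ a = 0 ∧ φ b = 0 := by
  obtain ⟨p, hd, hroot⟩ := Polynomial.exists_natDegree_pos_forall_not_isRoot hk
  refine ⟨aeval ![a, b] (p.homogenize p.natDegree), ?_, fun φ hφ => ?_⟩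
  · simpa [Matrix.range_cons, Set.pair_comm] using aeval_mem_span_range_of_constantCoeff_eq_zero
      ![a, b] (p.constantCoeff_homogenize hd.ne')
  · rw [comp_aeval_apply, aeval_eq_eval] at hφ
    have hab := Polynomial.eq_zero_of_eval_homogenize_eq_zero hroot hd hφ
    exact ⟨congrFun hab 0, congrFun hab 1⟩

theorem exists_mem_span_forall_algHom_eq_zero (hk : ¬ IsAlgClosed k) (G : Finset B) :
    ∃ D ∈ Ideal.span (G : Set B),
      ∀ φ : B →ₐ[k] k, φ D = 0 → ∀ g ∈ G, φ g = 0 := by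
  classical
  induction G using Finset.induction_on with
  | empty => exact ⟨0, zero_mem _, by simp⟩
  | insert g G _ ih =>
    obtain ⟨D, hD, hDG⟩ := ih
    obtain ⟨E, hE, hEgD⟩ := exists_mem_span_pair_forall_algHom_eq_zero hk g D
    refine ⟨E, ?_, fun φ hφ => ?_⟩
    · refine Ideal.span_le.2 ?_ hE
      rintro x (rfl | rfl)
      · exact Ideal.subset_span (by simp)
      · exact Ideal.span_mono (by simp) hD
    · obtain ⟨hg, hD⟩ := hEgD φ hφ
      simpa [hg] using hDG φ hD

end AlgHomToField

theorem MvPolynomial.exists_mem_forall_eval_ne_zero_of_zeroLocus_eq_empty {k σ : Type*} [Field k]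
    [Finite σ] {J : Ideal (MvPolynomial σ k)} (hJ : zeroLocus k J = ∅) :
    ∃ D ∈ J, ∀ v : σ → k, eval v D ≠ 0 := by
  by_cases hk : IsAlgClosed k
  · have hJtop : J = ⊤ := by
      simpa [hJ, vanishingIdeal_empty, eq_comm] using vanishingIdeal_zeroLocus_eq_radical (K := k) J
    exact ⟨1, hJtop ▸ Submodule.mem_top, by simp⟩
  · obtain ⟨G, rfl⟩ := J.fg_of_isNoetherianRing
    obtain ⟨D, hD, hDG⟩ := exists_mem_span_forall_algHom_eq_zero hk G
    refine ⟨D, hD, fun v hv => ?_⟩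
    have hvG : v ∈ zeroLocus k (Ideal.span (G : Set (MvPolynomial σ k))) := by
      rw [zeroLocus_span]
      exact hDG (aeval v) hv
    rwa [hJ] at hvG

section PointsOfAlgebra

variable (k A : Type) [Field k] [CommRing A] [Algebra k A]

theorem MAset_subset_Smonoid : MAset k A ⊆ Smonoid k A := by
  rintro _ ⟨m, D, b, hD, rfl⟩ φ hφ
  rw [comp_aeval_apply, aeval_eq_eval] at hφ
  exact hD _ hφ

theorem exists_mem_MAset_dvd_of_mem_Smonoid [Algebra.FiniteType k A] {f : A}
    (hf : f ∈ Smonoid k A) : ∃ m ∈ MAset k A, f ∣ m := by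
  obtain ⟨n, π, hπ⟩ := Algebra.FiniteType.iff_quotient_mvPolynomial''.1 ‹_›
  obtain ⟨F, rfl⟩ := hπ f
  have hJ : zeroLocus k (Ideal.comap π (Ideal.span {π F})) = ∅ := by
    refine Set.eq_empty_of_forall_notMem fun v hv => ?_
    have hvanish := mem_zeroLocus_iff.1 hv
    have hker : RingHom.ker π.toRingHom ≤ RingHom.ker (aeval v).toRingHom := fun q hq =>
      hvanish q (Ideal.comap_mono bot_le hq)
    apply hf (π.liftOfSurjective hπ (aeval v) hker)
    rw [AlgHom.liftOfSurjective_apply]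
    exact hvanish F (Ideal.mem_comap.2 (Ideal.subset_span rfl))
  obtain ⟨D, hDJ, hD⟩ := exists_mem_forall_eval_ne_zero_of_zeroLocus_eq_empty hJ
  refine ⟨π D, ⟨n, D, π ∘ X, hD, ?_⟩, Ideal.mem_span_singleton.1 hDJ⟩
  rw [← aeval_unique]

end PointsOfAlgebra

/-- For every finitely generated algebra `A` over a field `k`, the canonical localization
`A_M` (at the multiplicative set generated by `M_A`) is isomorphic, as an `A`-algebra, to the
localization `A_S`, where `S = {f ∈ A : φ(f) ≠ 0 for all k-morphisms φ : A → k}`. -/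
theorem canonicalLocalization_iso_localization_S (k A : Type) [Field k] [CommRing A]
    [Algebra k A] [Algebra.FiniteType k A] :
    Nonempty (Localization (Submonoid.closure (MAset k A)) ≃ₐ[A]
      Localization (Smonoid k A)) := by
  have : IsLocalization (Smonoid k A) (Localization (Submonoid.closure (MAset k A))) :=
    .of_le_of_exists_dvd _ _ (Submonoid.closure_le.2 (MAset_subset_Smonoid k A)) fun f hf =>
      let ⟨m, hm, hfm⟩ := exists_mem_MAset_dvd_of_mem_Smonoid k A hf
      ⟨m, Submonoid.subset_closure hm, hfm⟩
  exact ⟨IsLocalization.algEquiv (Smonoid k A) _ _⟩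
end

section
/- If A is a finitely generated algebra over a field k, then the canonical localization A_M is nonzero if and only if there exists a k-algebra homomorphism A_M → k. -/
/-!
A `k`-point `φ` of `A` sends every element of `M_A` to a nonzero scalar, so it extends to `A_M`.
Conversely, if `A` has no `k`-point then `0 ∈ M_A`. Either `A = 0`, or, by the Nullstellensatz,
`k` is not algebraically closed; then homogenizing a polynomial without roots and iterating gives,
for every `r`, a polynomial `Ψ` in `r` variables whose only zero in `kʳ` is `0`. Writing
`A = k[X₁, …, Xₙ]/(g₁, …, gᵣ)`, the polynomial `Ψ(g₁, …, gᵣ)` has no zero in `kⁿ` (it would be a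
`k`-point of `A`) and vanishes at the images of the `Xᵢ` in `A`.
-/

open MvPolynomial

namespace Polynomial

lemma eval_homogenize_of_eq_zero {R : Type*} [CommSemiring R] (p : R[X]) (n : ℕ)
    {v : Fin 2 → R} (hv : v 1 = 0) :
    MvPolynomial.eval v (p.homogenize n) = p.coeff n * v 0 ^ n := by
  rw [homogenize, MvPolynomial.eval_sum, Finset.sum_eq_single (n, 0)]
  · simp [MvPolynomial.eval_monomial, Finsupp.update_eq_add_single, Finsupp.prod_single_index]
  · rintro ⟨i, j⟩ hij hne
    have hj : j ≠ 0 := by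
      rintro rfl
      simp_all
    simp [MvPolynomial.eval_monomial, hv, hj]
  · simp [MvPolynomial.eval_monomial]

end Polynomial

namespace MvPolynomial

variable {R : Type*} [CommSemiring R]

def IsAnisotropic {σ : Type*} (Φ : MvPolynomial σ R) : Prop :=
  ∀ v : σ → R, eval v Φ = 0 ↔ v = 0

lemma IsAnisotropic.eval_bind₁_eq_zero_iff {σ τ : Type*} {Φ : MvPolynomial σ R}
    (hΦ : Φ.IsAnisotropic) (g : σ → MvPolynomial τ R) (v : τ → R) :
    eval v (bind₁ g Φ) = 0 ↔ ∀ i, eval v (g i) = 0 := by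
  have : eval v (bind₁ g Φ) = eval (fun i => eval v (g i)) Φ := eval₂Hom_bind₁ _ _ _ _
  rw [this, hΦ]
  exact _root_.funext_iff

/-- Plugging an anisotropic form in `r` variables into one slot of an anisotropic form in two
variables gives one in `r + 1` variables. -/
lemma exists_isAnisotropic_fin (Φ : MvPolynomial (Fin 2) R) (hΦ : Φ.IsAnisotropic) :
    ∀ r, ∃ Ψ : MvPolynomial (Fin r) R, Ψ.IsAnisotropic
  | 0 => ⟨0, fun v => by simp [Subsingleton.elim v 0]⟩
  | r + 1 => by
    obtain ⟨Ψ, hΨ⟩ := exists_isAnisotropic_fin Φ hΦ r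
    refine ⟨bind₁ ![X 0, rename Fin.succ Ψ] Φ, fun v => ?_⟩
    rw [hΦ.eval_bind₁_eq_zero_iff, Fin.forall_fin_two]
    simp only [Matrix.cons_val_zero, Matrix.cons_val_one, eval_X, eval_rename]
    rw [hΨ]
    simp [_root_.funext_iff, Fin.forall_fin_succ]

lemma IsAnisotropic.constantCoeff_eq_zero {σ : Type*} {Φ : MvPolynomial σ R}
    (hΦ : Φ.IsAnisotropic) : constantCoeff Φ = 0 := by
  rw [← eval_zero, hΦ]

lemma isAnisotropic_homogenize {k : Type*} [Field k] {p : Polynomial k} (hp : p.natDegree ≠ 0)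
    (hroot : ∀ x, p.eval x ≠ 0) : (p.homogenize p.natDegree).IsAnisotropic := by
  intro v
  refine ⟨fun hv => ?_, ?_⟩
  · by_cases h1 : v 1 = 0
    · have hp0 : p ≠ 0 := by rintro rfl; exact hp rfl
      rw [Polynomial.eval_homogenize_of_eq_zero _ _ h1, Polynomial.coeff_natDegree,
        mul_eq_zero, pow_eq_zero_iff hp] at hv
      have h0 : v 0 = 0 := hv.resolve_left (Polynomial.leadingCoeff_ne_zero.mpr hp0)
      ext i
      fin_cases i <;> assumption
    · rw [Polynomial.eval_homogenize le_rfl v h1] at hv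
      exact absurd hv (mul_ne_zero (hroot _) (pow_ne_zero _ h1))
  · rintro rfl
    rw [Polynomial.eval_homogenize_of_eq_zero _ _ rfl]
    simp [hp]

lemma exists_isAnisotropic_of_not_isAlgClosed {k : Type*} [Field k] (hk : ¬ IsAlgClosed k)
    (r : ℕ) : ∃ Ψ : MvPolynomial (Fin r) k, Ψ.IsAnisotropic := by
  obtain ⟨p, -, hirr, hroot⟩ : ∃ p : Polynomial k, p.Monic ∧ Irreducible p ∧ ∀ x, p.eval x ≠ 0 := by
    contrapose! hk
    exact IsAlgClosed.of_exists_root k hk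
  exact exists_isAnisotropic_fin _ (isAnisotropic_homogenize hirr.natDegree_pos.ne' hroot) r

end MvPolynomial

lemma nonempty_algHom_of_isAlgClosed (k A : Type*) [Field k] [IsAlgClosed k] [CommRing A]
    [Nontrivial A] [Algebra k A] [Algebra.FiniteType k A] : Nonempty (A →ₐ[k] k) := by
  obtain ⟨m, hm⟩ := Ideal.exists_maximal A
  let := Ideal.Quotient.field m
  have := finite_of_finite_type_of_isJacobsonRing k (A ⧸ m)
  exact ⟨(IsAlgClosed.lift : A ⧸ m →ₐ[k] k).comp (Ideal.Quotient.mkₐ k m)⟩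

lemma nonempty_algHom_of_ker_le_ker {k B A C : Type*} [CommRing k] [CommRing B] [CommRing A]
    [CommRing C] [Algebra k B] [Algebra k A] [Algebra k C] {π : B →ₐ[k] A}
    (hπ : Function.Surjective π) {φ : B →ₐ[k] C} (hφ : RingHom.ker π ≤ RingHom.ker φ) :
    Nonempty (A →ₐ[k] C) :=
  ⟨(Ideal.Quotient.liftₐ _ φ hφ).comp (Ideal.quotientKerAlgEquivOfSurjective hπ).symm.toAlgHom⟩

lemma zero_mem_MAset_of_isEmpty_algHom (k A : Type) [Field k] [CommRing A] [Algebra k A]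
    [Algebra.FiniteType k A] (h : IsEmpty (A →ₐ[k] k)) : (0 : A) ∈ MAset k A := by
  rcases subsingleton_or_nontrivial A with _ | _
  · exact ⟨0, 1, Fin.elim0, by simp, Subsingleton.elim _ _⟩
  have hk : ¬ IsAlgClosed k := fun _ => h.false (nonempty_algHom_of_isAlgClosed k A).some
  obtain ⟨n, π, hπ⟩ := Algebra.FiniteType.iff_quotient_mvPolynomial''.mp ‹_›
  obtain ⟨r, g, hg⟩ :=
    Submodule.fg_iff_exists_fin_generating_family.mp (IsNoetherian.noetherian (RingHom.ker π))
  obtain ⟨Ψ, hΨ⟩ := exists_isAnisotropic_of_not_isAlgClosed hk r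
  have hgπ : ∀ i, π (g i) = 0 := fun i => by
    show g i ∈ RingHom.ker π
    rw [← hg]
    exact Submodule.subset_span ⟨i, rfl⟩
  refine ⟨n, bind₁ g Ψ, π ∘ X, fun v hv => ?_, ?_⟩
  · rw [hΨ.eval_bind₁_eq_zero_iff] at hv
    refine h.false (nonempty_algHom_of_ker_le_ker hπ (φ := aeval v) ?_).some
    rw [← hg, Ideal.span_le]
    rintro _ ⟨i, rfl⟩
    exact hv i
  · rw [aeval_bind₁, ← aeval_unique π]
    simp only [hgπ]
    rw [aeval_zero', hΨ.constantCoeff_eq_zero, map_zero]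

lemma closure_MAset_le_comap_isUnit_submonoid {k A : Type} [Field k] [CommRing A] [Algebra k A]
    (φ : A →ₐ[k] k) : Submonoid.closure (MAset k A) ≤ (IsUnit.submonoid k).comap φ := by
  rw [Submonoid.closure_le]
  rintro _ ⟨m, D, b, hD, rfl⟩
  rw [SetLike.mem_coe, Submonoid.mem_comap, IsUnit.mem_submonoid_iff, comp_aeval_apply]
  exact isUnit_iff_ne_zero.mpr (hD _)

/-- If `A` is a finitely generated algebra over a field `k`, then the canonical localization
`A_M` is nonzero if and only if there exists a `k`-algebra homomorphism `A_M → k`. -/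
theorem canonicalLocalization_nontrivial_iff_point (k A : Type) [Field k] [CommRing A]
    [Algebra k A] [Algebra.FiniteType k A] :
    Nontrivial (Localization (Submonoid.closure (MAset k A))) ↔
      Nonempty (Localization (Submonoid.closure (MAset k A)) →ₐ[k] k) := by
  refine ⟨fun hnt => ?_, fun ⟨f⟩ => f.domain_nontrivial⟩
  obtain ⟨φ⟩ : Nonempty (A →ₐ[k] k) := by
    by_contra h
    have h0 := Submonoid.subset_closure
      (zero_mem_MAset_of_isEmpty_algHom k A (not_nonempty_iff.mp h))
    exact not_subsingleton _ (IsLocalization.subsingleton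
      (S := Localization (Submonoid.closure (MAset k A))) h0)
  exact ⟨IsLocalization.liftAlgHom (f := φ) fun y => closure_MAset_le_comap_isUnit_submonoid φ y.2⟩
end
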